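/- Implicit individual permission granting: there exist a valid state s, a dangerous permission p, and an application app such that p is not in the set of individually granted permissions of app in s, p is not among the permissions defined by app, and yet appHasPermission app p s holds (because the permission group of p was granted to app). -/

import Mathlib

abbrev AppId := ℕ
abbrev PermId := ℕ
abbrev PermGroup := ℕ

inductive PermLvl : Type
  | dangerous | normal | signature | signatureSystem
deriving DecidableEq

structure Perm where
  id : PermId
  group : Option PermGroup
  level : PermLvl
deriving DecidableEq

/-- A (simplified) Android state. -/
structure AndroidST where
  installedApps : List AppId
  grantedPermGroups : AppId → List PermGroup
  grantedPerms : AppId → List Perm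
  defPerms : AppId → List Perm
  /-- permissions listed as used in the app's manifest -/
  requestedPerms : AppId → List PermId

def getPermissionLevel (p : Perm) : PermLvl := p.level

def getGrantedPermsForApp (app : AppId) (s : AndroidST) : List Perm :=
  s.grantedPerms app

def getDefPermsForApp (app : AppId) (s : AndroidST) : List Perm :=
  s.defPerms app

/-- `app` holds permission `p` in `s`: `p` is requested in the manifest and either
individually granted, or its group was granted. -/
def appHasPermission (app : AppId) (p : Perm) (s : AndroidST) : Prop :=
  p.id ∈ s.requestedPerms app ∧
    (p ∈ s.grantedPerms app ∨
      ∃ g : PermGroup, p.group = some g ∧ g ∈ s.grantedPermGroups app)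

/-- Well-formedness of states (simplified): no duplicate installed apps, and
permissions are only granted/defined for installed apps. -/
def valid_state (s : AndroidST) : Prop :=
  s.installedApps.Nodup ∧
  (∀ app : AppId, app ∉ s.installedApps →
    s.grantedPerms app = [] ∧ s.grantedPermGroups app = [] ∧
    s.defPerms app = [] ∧ s.requestedPerms app = [])

theorem appHasPermission_of_mem_grantedPermGroups {app : AppId} {p : Perm} {s : AndroidST}
    {g : PermGroup} (hreq : p.id ∈ s.requestedPerms app) (hg : p.group = some g)
    (hmem : g ∈ s.grantedPermGroups app) : appHasPermission app p s :=
  ⟨hreq, .inr ⟨g, hg, hmem⟩⟩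

def groupGrantedState (app : AppId) (p : PermId) (g : PermGroup) : AndroidST where
  installedApps := [app]
  grantedPermGroups a := if a = app then [g] else []
  grantedPerms _ := []
  defPerms _ := []
  requestedPerms a := if a = app then [p] else []

section groupGrantedState

variable (app : AppId) (p : PermId) (g : PermGroup)

theorem valid_state_groupGrantedState : valid_state (groupGrantedState app p g) := by
  refine ⟨List.nodup_singleton app, fun a ha => ?_⟩
  have hne : a ≠ app := fun h => ha (h ▸ List.mem_singleton_self app)
  simp [groupGrantedState, hne]

theorem getGrantedPermsForApp_groupGrantedState (a : AppId) :
    getGrantedPermsForApp a (groupGrantedState app p g) = [] :=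
  rfl

theorem getDefPermsForApp_groupGrantedState (a : AppId) :
    getDefPermsForApp a (groupGrantedState app p g) = [] :=
  rfl

theorem appHasPermission_groupGrantedState {q : Perm} (hq : q.group = some g) :
    appHasPermission app q (groupGrantedState app q.id g) :=
  appHasPermission_of_mem_grantedPermGroups (by simp [groupGrantedState]) hq
    (by simp [groupGrantedState])

end groupGrantedState

/-- Implicit individual permission granting: an app may hold a dangerous permission
that was never individually granted to it nor defined by it. -/
theorem implicit_individual_permission_granting :
    ∃ (s : AndroidST) (p : Perm) (app : AppId),
      valid_state s ∧
      getPermissionLevel p = PermLvl.dangerous ∧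
      p ∉ getGrantedPermsForApp app s ∧
      p ∉ getDefPermsForApp app s ∧
      appHasPermission app p s := by
  let p : Perm := ⟨0, some 0, .dangerous⟩
  refine ⟨groupGrantedState 0 p.id 0, p, 0, valid_state_groupGrantedState 0 p.id 0, rfl, ?_, ?_,
    appHasPermission_groupGrantedState 0 0 rfl⟩
  · rw [getGrantedPermsForApp_groupGrantedState]
    exact List.not_mem_nil
  · rw [getDefPermsForApp_groupGrantedState]
    exact List.not_mem_nil
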